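/- If Δ is a cycle, then Δ has at least 3 facets, and the facets of Δ can be enumerated as F₁, …, Fₙ such that F₁ ∼_Δ F₂ ∼_Δ ⋯ ∼_Δ Fₙ ∼_Δ F₁, and Fᵢ ∼_Δ Fⱼ holds in no other cases; in particular each facet of Δ is a strong neighbor of exactly two other facets. -/

import Mathlib

variable {V : Type*} [DecidableEq V]

/-- A facet complex: no facet contains another. -/
def IsFacetComplex (Δ : Finset (Finset V)) : Prop :=
  ∀ F ∈ Δ, ∀ G ∈ Δ, F ⊆ G → F = G

/-- `F` is a leaf of `Δ`. -/
def IsLeaf (Δ : Finset (Finset V)) (F : Finset V) : Prop :=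
  F ∈ Δ ∧ (Δ = {F} ∨ ∃ G ∈ Δ.erase F, ∀ H ∈ Δ.erase F, H ∩ F ⊆ G ∩ F)

/-- `Δ` is a forest: every nonempty subset has a leaf. -/
def IsForest (Δ : Finset (Finset V)) : Prop :=
  ∀ Γ ⊆ Δ, Γ.Nonempty → ∃ F, IsLeaf Γ F

/-- `Δ` is connected: any two facets are joined by a path of consecutively
intersecting facets. -/
def FCConnected (Δ : Finset (Finset V)) : Prop :=
  ∀ F ∈ Δ, ∀ G ∈ Δ,
    Relation.ReflTransGen (fun A B => A ∈ Δ ∧ B ∈ Δ ∧ (A ∩ B).Nonempty) F G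

/-- A (simplicial) tree is a connected forest. -/
def IsTree (Δ : Finset (Finset V)) : Prop := FCConnected Δ ∧ IsForest Δ

/-- A cycle: a nonempty facet complex with no leaf, every nonempty proper
subset of which has a leaf. -/
def IsCycle (Δ : Finset (Finset V)) : Prop :=
  Δ.Nonempty ∧ (¬ ∃ F, IsLeaf Δ F) ∧ ∀ Γ ⊂ Δ, Γ.Nonempty → ∃ F, IsLeaf Γ F

/-- Strong neighbors in `Δ`. -/
def StrongNeighbor (Δ : Finset (Finset V)) (F G : Finset V) : Prop :=
  F ∈ Δ ∧ G ∈ Δ ∧ F ≠ G ∧ ∀ H ∈ Δ, F ∩ G ⊆ H → H = F ∨ H = G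

lemma sn_symm {Δ : Finset (Finset V)} {F G : Finset V}
    (h : StrongNeighbor Δ F G) : StrongNeighbor Δ G F := by
  obtain ⟨h1, h2, h3, h4⟩ := h
  refine ⟨h2, h1, h3.symm, fun H hH hsub => ?_⟩
  rw [Finset.inter_comm] at hsub
  exact (h4 H hH hsub).symm

lemma sn_mono {Γ Δ : Finset (Finset V)} {F G : Finset V}
    (hsub : Γ ⊆ Δ) (hF : F ∈ Γ) (hG : G ∈ Γ)
    (h : StrongNeighbor Δ F G) : StrongNeighbor Γ F G :=
  ⟨hF, hG, h.2.2.1, fun H hH => h.2.2.2 H (hsub hH)⟩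

lemma leaf_unique_sn {Γ : Finset (Finset V)} {L A B : Finset V}
    (hL : IsLeaf Γ L) (hA : StrongNeighbor Γ L A) (hB : StrongNeighbor Γ L B) :
    A = B := by
  obtain ⟨hLΓ, hsing | ⟨G, hG, hGmax⟩⟩ := hL
  · exact absurd (hsing ▸ hA.2.1 : A ∈ ({L} : Finset (Finset V)))
      (by simpa using hA.2.2.1.symm)
  · have hGA : G = A := by
      have hAe : A ∈ Γ.erase L := Finset.mem_erase.2 ⟨hA.2.2.1.symm, hA.2.1⟩
      have h1 : L ∩ A ⊆ G := by
        intro x hx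
        have := hGmax A hAe (by rw [Finset.inter_comm]; exact hx)
        exact (Finset.mem_inter.1 this).1
      rcases hA.2.2.2 G (Finset.mem_erase.1 hG).2 h1 with h | h
      · exact absurd h (Finset.mem_erase.1 hG).1
      · exact h
    have hGB : G = B := by
      have hBe : B ∈ Γ.erase L := Finset.mem_erase.2 ⟨hB.2.2.1.symm, hB.2.1⟩
      have h1 : L ∩ B ⊆ G := by
        intro x hx
        have := hGmax B hBe (by rw [Finset.inter_comm]; exact hx)
        exact (Finset.mem_inter.1 this).1
      rcases hB.2.2.2 G (Finset.mem_erase.1 hG).2 h1 with h | h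
      · exact absurd h (Finset.mem_erase.1 hG).1
      · exact h
    rw [← hGA, hGB]

/-- A two-element facet complex has a leaf. -/
lemma leaf_of_card_le_two {Δ : Finset (Finset V)} (hne : Δ.Nonempty)
    (h : Δ.card ≤ 2) : ∃ F, IsLeaf Δ F := by
  interval_cases hc : Δ.card
  · simp [Finset.card_eq_zero.1 hc] at hne
  · obtain ⟨F, hF⟩ := Finset.card_eq_one.1 hc
    exact ⟨F, by simp [IsLeaf, hF]⟩
  · obtain ⟨A, B, hAB, hΔ⟩ := Finset.card_eq_two.1 hc
    refine ⟨A, by simp [hΔ], Or.inr ⟨B, ?_, ?_⟩⟩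
    · simp [hΔ, Finset.mem_erase, hAB.symm]
    · intro H hH
      have : H = B := by
        rcases Finset.mem_erase.1 hH with ⟨hne', hH'⟩
        simp [hΔ] at hH'
        tauto
      simp [this]

lemma forest_two_leaves : ∀ (n : ℕ) (Γ : Finset (Finset V)), Γ.card = n →
    IsForest Γ → 2 ≤ Γ.card →
    ∃ L₁ L₂, L₁ ≠ L₂ ∧ IsLeaf Γ L₁ ∧ IsLeaf Γ L₂ := by
  intro n
  induction n using Nat.strong_induction_on with
  | _ n ih =>
    intro Γ hcard hforest h2
    rcases eq_or_lt_of_le h2 with h2' | h3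
    · -- card = 2
      obtain ⟨A, B, hAB, hΓ⟩ := Finset.card_eq_two.1 h2'.symm
      have leafA : ∀ X Y : Finset V, X ≠ Y → Γ = {X, Y} → IsLeaf Γ X := by
        intro X Y hXY hΓ'
        refine ⟨by simp [hΓ'], Or.inr ⟨Y, ?_, ?_⟩⟩
        · simp [hΓ', Finset.mem_erase, hXY.symm]
        · intro H hH
          rcases Finset.mem_erase.1 hH with ⟨hne', hH'⟩
          simp only [hΓ', Finset.mem_insert, Finset.mem_singleton] at hH'
          rcases hH' with rfl | rfl
          · exact absurd rfl hne'
          · exact Finset.Subset.refl _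
      exact ⟨A, B, hAB, leafA A B hAB hΓ,
        leafA B A hAB.symm (by rw [hΓ]; exact Finset.pair_comm A B)⟩
    · -- card ≥ 3
      obtain ⟨F, hF⟩ := hforest Γ (Finset.Subset.refl _) (Finset.card_pos.1 (by omega))
      have hFΓ := hF.1
      have hns : Γ ≠ {F} := by
        intro h; rw [h] at h3; simp at h3
      obtain ⟨G, hG, hGmax⟩ := hF.2.resolve_left hns
      set Γ' := Γ.erase F with hΓ'
      have hΓ'sub : Γ' ⊆ Γ := Finset.erase_subset _ _
      have hcard' : Γ'.card = Γ.card - 1 := Finset.card_erase_of_mem hFΓ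
      have hforest' : IsForest Γ' := fun S hS => hforest S (hS.trans hΓ'sub)
      obtain ⟨L₁, L₂, hL12, hL₁, hL₂⟩ :=
        ih (Γ.card - 1) (by omega) Γ' (by omega) hforest' (by omega)
      -- one of L₁ L₂ differs from G
      have key : ∀ L, IsLeaf Γ' L → L ≠ G → IsLeaf Γ L := by
        intro L hL hLG
        have hLΓ' := hL.1
        have hLF : L ≠ F := (Finset.mem_erase.1 hLΓ').1
        have hns' : Γ' ≠ {L} := by
          intro h
          rw [h] at hcard'; simp at hcard'; omega
        obtain ⟨G', hG', hG'max⟩ := hL.2.resolve_left hns'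
        have hG'' : G' ∈ Γ.erase L := by
          rcases Finset.mem_erase.1 hG' with ⟨ha, hb⟩
          exact Finset.mem_erase.2 ⟨ha, hΓ'sub hb⟩
        refine ⟨hΓ'sub hLΓ', Or.inr ⟨G', hG'', ?_⟩⟩
        intro H hH
        rcases Finset.mem_erase.1 hH with ⟨hHL, hHΓ⟩
        by_cases hHF : H = F
        · -- F ∩ L ⊆ G ∩ L ⊆ G' ∩ L
          subst hHF
          have h1 : L ∩ H ⊆ G ∩ H := hGmax L (Finset.mem_erase.2 ⟨hLF, hΓ'sub hLΓ'⟩)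
          have h2 : H ∩ L ⊆ G ∩ L := by
            intro x hx
            rcases Finset.mem_inter.1 hx with ⟨hx1, hx2⟩
            have := h1 (Finset.mem_inter.2 ⟨hx2, hx1⟩)
            exact Finset.mem_inter.2 ⟨(Finset.mem_inter.1 this).1, hx2⟩
          have hGΓ' : G ∈ Γ'.erase L := by
            refine Finset.mem_erase.2 ⟨fun h => hLG h.symm, hG⟩
          exact h2.trans (hG'max G hGΓ')
        · exact hG'max H (Finset.mem_erase.2 ⟨hHL,
            Finset.mem_erase.2 ⟨hHF, hHΓ⟩⟩)
      by_cases h1 : L₁ = G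
      · have hL2G : L₂ ≠ G := fun h => hL12 (h1.trans h.symm)
        exact ⟨F, L₂, fun h => (Finset.mem_erase.1 hL₂.1).1 h.symm,
          hF, key L₂ hL₂ hL2G⟩
      · exact ⟨F, L₁, fun h => (Finset.mem_erase.1 hL₁.1).1 h.symm,
          hF, key L₁ hL₁ h1⟩

lemma cycle_card_ge_three {Δ : Finset (Finset V)} (hcyc : IsCycle Δ) :
    3 ≤ Δ.card := by
  by_contra h
  push_neg at h
  exact hcyc.2.1 (leaf_of_card_le_two hcyc.1 (by omega))

/-- A leaf of `Δ.erase F` is a strong neighbor of `F` in the cycle `Δ`. -/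
lemma sn_of_erase_leaf {Δ : Finset (Finset V)} (hcyc : IsCycle Δ)
    {F L : Finset V} (hF : F ∈ Δ) (hL : IsLeaf (Δ.erase F) L) :
    StrongNeighbor Δ L F := by
  have h3 := cycle_card_ge_three hcyc
  have hcard : 2 ≤ (Δ.erase F).card := by
    rw [Finset.card_erase_of_mem hF]; omega
  have hLe := hL.1
  rcases Finset.mem_erase.1 hLe with ⟨hLF, hLΔ⟩
  have hns : Δ.erase F ≠ {L} := by
    intro h; rw [h] at hcard; simp at hcard
  obtain ⟨G, hG, hGmax⟩ := hL.2.resolve_left hns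
  refine ⟨hLΔ, hF, hLF, ?_⟩
  intro H hH hsub
  by_contra hcon
  push_neg at hcon
  obtain ⟨hHL, hHF⟩ := hcon
  -- then L is a leaf of Δ, contradiction
  refine hcyc.2.1 ⟨L, hLΔ, Or.inr ⟨G, ?_, ?_⟩⟩
  · rcases Finset.mem_erase.1 hG with ⟨h1, h2⟩
    exact Finset.mem_erase.2 ⟨h1, Finset.mem_of_mem_erase h2⟩
  · intro K hK
    rcases Finset.mem_erase.1 hK with ⟨hKL, hKΔ⟩
    by_cases hKF : K = F
    · subst hKF
      have hHe : H ∈ (Δ.erase K).erase L :=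
        Finset.mem_erase.2 ⟨hHL, Finset.mem_erase.2 ⟨hHF, hH⟩⟩
      have : K ∩ L ⊆ H ∩ L := by
        intro x hx
        rcases Finset.mem_inter.1 hx with ⟨hx1, hx2⟩
        exact Finset.mem_inter.2 ⟨hsub (Finset.mem_inter.2 ⟨hx2, hx1⟩), hx2⟩
      exact this.trans (hGmax H hHe)
    · exact hGmax K (Finset.mem_erase.2 ⟨hKL, Finset.mem_erase.2 ⟨hKF, hKΔ⟩⟩)

/-- In a cycle, every facet has two distinct strong neighbors. -/
lemma cycle_two_sn {Δ : Finset (Finset V)} (hcyc : IsCycle Δ)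
    {F : Finset V} (hF : F ∈ Δ) :
    ∃ A B, A ≠ B ∧ StrongNeighbor Δ F A ∧ StrongNeighbor Δ F B := by
  have h3 := cycle_card_ge_three hcyc
  have hforest : IsForest (Δ.erase F) := by
    intro S hS hSne
    refine hcyc.2.2 S ?_ hSne
    exact lt_of_le_of_lt hS (Finset.erase_ssubset hF)
  obtain ⟨L₁, L₂, h12, hL₁, hL₂⟩ := forest_two_leaves _ (Δ.erase F) rfl hforest
    (by rw [Finset.card_erase_of_mem hF]; omega)
  exact ⟨L₁, L₂, h12, sn_symm (sn_of_erase_leaf hcyc hF hL₁),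
    sn_symm (sn_of_erase_leaf hcyc hF hL₂)⟩

/-- A subcomplex in which every facet has two distinct strong neighbors has no leaf. -/
lemma no_leaf_of_two_sn {Γ : Finset (Finset V)}
    (h2 : ∀ L ∈ Γ, ∃ A B, A ≠ B ∧ StrongNeighbor Γ L A ∧ StrongNeighbor Γ L B) :
    ¬ ∃ L, IsLeaf Γ L := by
  rintro ⟨L, hL⟩
  obtain ⟨A, B, hAB, hA, hB⟩ := h2 L hL.1
  exact hAB (leaf_unique_sn hL hA hB)

/-- In a cycle, a nonempty "2-regular" subset must be everything. -/
lemma eq_of_two_sn {Δ Γ : Finset (Finset V)} (hcyc : IsCycle Δ)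
    (hsub : Γ ⊆ Δ) (hne : Γ.Nonempty)
    (h2 : ∀ L ∈ Γ, ∃ A B, A ≠ B ∧ StrongNeighbor Γ L A ∧ StrongNeighbor Γ L B) :
    Γ = Δ := by
  by_contra h
  exact no_leaf_of_two_sn h2 (hcyc.2.2 Γ (lt_of_le_of_ne hsub h) hne)

lemma cycle_ham {Δ : Finset (Finset V)} (hcyc : IsCycle Δ) :
    ∃ (k : ℕ) (f : ℕ → Finset V),
      k + 1 = Δ.card ∧ (∀ i ≤ k, f i ∈ Δ) ∧
      (∀ i, i ≤ k → ∀ j, j ≤ k → f i = f j → i = j) ∧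
      (∀ i, i < k → StrongNeighbor Δ (f i) (f (i + 1))) ∧
      StrongNeighbor Δ (f k) (f 0) ∧
      (∀ G ∈ Δ, ∃ i ≤ k, f i = G) := by
  classical
  set P : ℕ → Prop := fun k => ∃ f : ℕ → Finset V,
    (∀ i ≤ k, f i ∈ Δ) ∧ (∀ i, i ≤ k → ∀ j, j ≤ k → f i = f j → i = j) ∧
    (∀ i, i < k → StrongNeighbor Δ (f i) (f (i + 1))) with hP
  obtain ⟨F₀, hF₀⟩ := hcyc.1
  have hP0 : P 0 := ⟨fun _ => F₀, fun i hi => by simpa using hF₀,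
    fun i hi j hj _ => by omega, fun i hi => by omega⟩
  have hbound : ∀ m, P m → m < Δ.card := by
    rintro m ⟨f, hmem, hinj, -⟩
    have : (Finset.range (m + 1)).card ≤ Δ.card := by
      apply Finset.card_le_card_of_injOn f
      · intro i hi
        exact hmem i (by simpa using Nat.lt_succ_iff.1 (Finset.mem_range.1 hi))
      · intro i hi j hj hij
        exact hinj i (Nat.lt_succ_iff.1 (Finset.mem_range.1 hi)) j
          (Nat.lt_succ_iff.1 (Finset.mem_range.1 hj)) hij
    simpa using this
  set k := Nat.findGreatest P Δ.card with hk
  have hPk : P k := Nat.findGreatest_spec (Nat.zero_le _) hP0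
  have hle : ∀ m, P m → m ≤ k := fun m hm =>
    Nat.le_findGreatest (le_of_lt (hbound m hm)) hm
  obtain ⟨f, hmem, hinj, hsn⟩ := hPk
  have hkcard : k < Δ.card := hbound k ⟨f, hmem, hinj, hsn⟩
  -- maximality: every strong neighbor of f k already lies on the path
  have hext : ∀ X, StrongNeighbor Δ (f k) X → ∃ i ≤ k, f i = X := by
    intro X hX
    by_contra hcon
    push_neg at hcon
    have hPk1 : P (k + 1) := by
      refine ⟨fun j => if j = k + 1 then X else f j, ?_, ?_, ?_⟩
      · intro i hi
        by_cases h : i = k + 1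
        · simpa [h] using hX.2.1
        · simpa [h] using hmem i (by omega)
      · intro i hi j hj hij
        by_cases h1 : i = k + 1 <;> by_cases h2 : j = k + 1
        · omega
        · simp [h1, h2] at hij
          exact absurd hij.symm (hcon j (by omega))
        · simp [h1, h2] at hij
          exact absurd hij (hcon i (by omega))
        · simp [h1, h2] at hij
          exact hinj i (by omega) j (by omega) hij
      · intro i hi
        by_cases h : i = k
        · subst h
          simpa using hX
        · have h1 : i ≠ k + 1 := by omega
          have h2 : i + 1 ≠ k + 1 := by omega
          simpa [h1, h2, h] using hsn i (by omega)
    have := hle (k + 1) hPk1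
    omega
  obtain ⟨A, B, hAB, hA, hB⟩ := cycle_two_sn hcyc (hmem k (le_refl k))
  obtain ⟨iA, hiA, hfA⟩ := hext A hA
  obtain ⟨iB, hiB, hfB⟩ := hext B hB
  have hiAk : iA ≠ k := fun h => hA.2.2.1 (by rw [← hfA, h])
  have hiBk : iB ≠ k := fun h => hB.2.2.1 (by rw [← hfB, h])
  have hiAB : iA ≠ iB := fun h => hAB (by rw [← hfA, ← hfB, h])
  obtain ⟨i₀, hi₀k, hclose⟩ : ∃ i₀, i₀ + 2 ≤ k ∧ StrongNeighbor Δ (f k) (f i₀) := by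
    rcases lt_or_gt_of_ne hiAB with h | h
    · exact ⟨iA, by omega, hfA ▸ hA⟩
    · exact ⟨iB, by omega, hfB ▸ hB⟩
  set Γ := (Finset.Icc i₀ k).image f with hΓ
  have hΓsub : Γ ⊆ Δ := by
    intro x hx
    obtain ⟨t, ht, rfl⟩ := Finset.mem_image.1 hx
    exact hmem t (Finset.mem_Icc.1 ht).2
  have hmemΓ : ∀ t, i₀ ≤ t → t ≤ k → f t ∈ Γ := fun t h1 h2 =>
    Finset.mem_image.2 ⟨t, Finset.mem_Icc.2 ⟨h1, h2⟩, rfl⟩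
  have h2sn : ∀ L ∈ Γ, ∃ A B, A ≠ B ∧ StrongNeighbor Γ L A ∧ StrongNeighbor Γ L B := by
    intro L hL
    obtain ⟨t, ht, rfl⟩ := Finset.mem_image.1 hL
    obtain ⟨ht1, ht2⟩ := Finset.mem_Icc.1 ht
    by_cases hti : t = i₀
    · -- t = i₀
      have hcloset : StrongNeighbor Δ (f k) (f t) := by rw [hti]; exact hclose
      refine ⟨f (t + 1), f k, ?_, ?_, ?_⟩
      · intro h; have := hinj (t+1) (by omega) k (le_refl k) h; omega
      · exact sn_mono hΓsub (hmemΓ t ht1 ht2) (hmemΓ (t+1) (by omega) (by omega))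
          (hsn t (by omega))
      · exact sn_mono hΓsub (hmemΓ t ht1 ht2) (hmemΓ k (by omega) (le_refl k))
          (sn_symm hcloset)
    · by_cases htk : t = k
      · -- t = k
        have hk1 : t - 1 + 1 = t := by omega
        have e1 : StrongNeighbor Δ (f (t - 1)) (f t) := by
          have := hsn (t-1) (by omega)
          rwa [hk1] at this
        have e2 : StrongNeighbor Δ (f t) (f i₀) := by rw [htk]; exact hclose
        refine ⟨f (t - 1), f i₀, ?_, ?_, ?_⟩
        · intro h; have := hinj (t-1) (by omega) i₀ (by omega) h; omega
        · exact sn_mono hΓsub (hmemΓ t ht1 ht2)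
            (hmemΓ (t-1) (by omega) (by omega)) (sn_symm e1)
        · exact sn_mono hΓsub (hmemΓ t ht1 ht2)
            (hmemΓ i₀ (le_refl i₀) (by omega)) e2
      · -- interior
        have hk1 : t - 1 + 1 = t := by omega
        have e1 : StrongNeighbor Δ (f (t - 1)) (f t) := by
          have := hsn (t-1) (by omega)
          rwa [hk1] at this
        refine ⟨f (t - 1), f (t + 1), ?_, ?_, ?_⟩
        · intro h; have := hinj (t-1) (by omega) (t+1) (by omega) h; omega
        · exact sn_mono hΓsub (hmemΓ t ht1 ht2)
            (hmemΓ (t-1) (by omega) (by omega)) (sn_symm e1)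
        · exact sn_mono hΓsub (hmemΓ t ht1 ht2)
            (hmemΓ (t+1) (by omega) (by omega)) (hsn t (by omega))
  have hΓΔ : Γ = Δ := eq_of_two_sn hcyc hΓsub ⟨f k, hmemΓ k (by omega) (le_refl k)⟩ h2sn
  have hΓcard : Γ.card = k + 1 - i₀ := by
    rw [hΓ, Finset.card_image_of_injOn, Nat.card_Icc]
    intro i hi j hj hij
    exact hinj i (Finset.mem_Icc.1 hi).2 j (Finset.mem_Icc.1 hj).2 hij
  rw [hΓΔ] at hΓcard
  have hi₀0 : i₀ = 0 := by omega
  subst hi₀0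
  refine ⟨k, f, by omega, hmem, hinj, hsn, hclose, ?_⟩
  intro G hG
  rw [← hΓΔ] at hG
  obtain ⟨t, ht, rfl⟩ := Finset.mem_image.1 hG
  exact ⟨t, (Finset.mem_Icc.1 ht).2, rfl⟩

open scoped Fin.NatCast Fin.CommRing

theorem cycle_is_sequence_of_strong_neighbors (Δ : Finset (Finset V))
    (hΔ : IsFacetComplex Δ) (hcyc : IsCycle Δ) :
    3 ≤ Δ.card ∧
      ∃ n : ℕ, ∃ F : Fin (n + 3) → Finset V, Function.Injective F ∧
        Finset.image F Finset.univ = Δ ∧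
        (∀ i : Fin (n + 3), StrongNeighbor Δ (F i) (F (i + 1))) ∧
        (∀ i j : Fin (n + 3), StrongNeighbor Δ (F i) (F j) →
          j = i + 1 ∨ i = j + 1) := by
  have h3 := cycle_card_ge_three hcyc
  obtain ⟨k, f, hkcard, hmem, hinj, hsn, hclose, hsurj⟩ := cycle_ham hcyc
  refine ⟨h3, Δ.card - 3, ?_⟩
  set m := Δ.card - 3 with hm
  have hN : m + 3 = k + 1 := by omega
  set F : Fin (m + 3) → Finset V := fun a => f a.val with hF
  have hvlt : ∀ a : Fin (m + 3), a.val ≤ k := fun a => by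
    have := a.isLt; omega
  have hFinj : Function.Injective F := by
    intro a b h
    exact Fin.ext (hinj a.val (hvlt a) b.val (hvlt b) h)
  have hFΔ : ∀ a, F a ∈ Δ := fun a => hmem a.val (hvlt a)
  have himg : Finset.image F Finset.univ = Δ := by
    apply Finset.Subset.antisymm
    · intro x hx
      obtain ⟨a, -, rfl⟩ := Finset.mem_image.1 hx
      exact hFΔ a
    · intro x hx
      obtain ⟨i, hi, rfl⟩ := hsurj x hx
      exact Finset.mem_image.2 ⟨⟨i, by omega⟩, Finset.mem_univ _, rfl⟩
  have hedge : ∀ a : Fin (m + 3), StrongNeighbor Δ (F a) (F (a + 1)) := by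
    intro a
    have hval : (a + 1).val = (a.val + 1) % (m + 3) := by
      rw [Fin.add_def]
      congr 1
    by_cases hl : a.val = k
    · have h0 : (a + 1).val = 0 := by
        rw [hval, hl, ← hN]
        exact Nat.mod_self _
      show StrongNeighbor Δ (f a.val) (f (a + 1).val)
      rw [hl, h0]
      exact hclose
    · have h1 : (a + 1).val = a.val + 1 := by
        rw [hval, Nat.mod_eq_of_lt (by have := hvlt a; omega)]
      show StrongNeighbor Δ (f a.val) (f (a + 1).val)
      rw [h1]
      exact hsn a.val (by have := hvlt a; omega)
  refine ⟨F, hFinj, himg, hedge, ?_⟩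
  intro a b hab
  by_contra hcon
  push_neg at hcon
  obtain ⟨hba1, hab1⟩ := hcon
  have habne : a ≠ b := fun h => hab.2.2.1 (congrArg F h)
  set d := (b - a).val with hd
  have hd0 : d ≠ 0 := by
    intro h
    have : b - a = 0 := Fin.ext (by rw [← hd]; simpa using h)
    exact habne (sub_eq_zero.1 this).symm
  have hd1 : d ≠ 1 := by
    intro h
    apply hba1
    have hba : b - a = 1 := by
      apply Fin.ext
      rw [← hd, h]
      rfl
    have h2 : b - a + a = b := sub_add_cancel b a
    rw [hba] at h2
    rw [← h2]
    exact add_comm 1 a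
  have hdN : d ≠ m + 2 := by
    intro h
    apply hab1
    have hba : b - a = -1 := by
      apply Fin.ext
      rw [← hd, h]
      simp [Fin.coe_neg_one]
    have h2 : b - a + a = b := sub_add_cancel b a
    rw [hba] at h2
    have h4 : b + 1 = a := by
      rw [← h2]
      ring
    exact h4.symm
  have hdlt : d < m + 3 := (b - a).isLt
  have hd2 : 2 ≤ d := by omega
  have hdm : d ≤ m + 1 := by omega
  set g : ℕ → Fin (m + 3) := fun t => a + (t : Fin (m + 3)) with hg
  have hgval : ∀ t < m + 3, ((t : ℕ) : Fin (m + 3)).val = t := by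
    intro t ht
    simp [Fin.val_natCast, Nat.mod_eq_of_lt ht]
  have hginj : ∀ s < m + 3, ∀ t < m + 3, g s = g t → s = t := by
    intro s hs t ht h
    have h2 : ((s : ℕ) : Fin (m + 3)) = ((t : ℕ) : Fin (m + 3)) := by
      exact add_left_cancel h
    have := congrArg Fin.val h2
    rwa [hgval s hs, hgval t ht] at this
  have hgd : g d = b := by
    show a + ((d : ℕ) : Fin (m + 3)) = b
    rw [hd, Fin.cast_val_eq_self]
    ring
  have hgsucc : ∀ t : ℕ, g t + 1 = g (t + 1) := by
    intro t
    show a + _ + 1 = a + _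
    push_cast
    ring
  set Γ : Finset (Finset V) := (Finset.range (d + 1)).image (fun t => F (g t)) with hΓ
  have hmemΓ : ∀ t ≤ d, F (g t) ∈ Γ := fun t ht =>
    Finset.mem_image.2 ⟨t, Finset.mem_range.2 (by omega), rfl⟩
  have hΓsub : Γ ⊆ Δ := by
    intro x hx
    obtain ⟨t, -, rfl⟩ := Finset.mem_image.1 hx
    exact hFΔ _
  have hnotin : F (b + 1) ∉ Γ := by
    intro hmem'
    obtain ⟨t, ht, hteq⟩ := Finset.mem_image.1 hmem'
    have ht' := Finset.mem_range.1 ht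
    have hgt : g t = b + 1 := hFinj hteq
    have hgd1 : g (d + 1) = b + 1 := by rw [← hgsucc, hgd]
    have := hginj t (by omega) (d + 1) (by omega) (hgt.trans hgd1.symm)
    omega
  have hss : Γ ⊂ Δ := by
    rw [Finset.ssubset_iff_of_subset hΓsub]
    exact ⟨F (b + 1), hFΔ _, hnotin⟩
  have h2sn : ∀ L ∈ Γ, ∃ A B, A ≠ B ∧ StrongNeighbor Γ L A ∧ StrongNeighbor Γ L B := by
    intro L hL
    obtain ⟨t, htr, rfl⟩ := Finset.mem_image.1 hL
    have ht := Finset.mem_range.1 htr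
    have hgne : ∀ s ≤ d, ∀ u ≤ d, s ≠ u → F (g s) ≠ F (g u) := by
      intro s hs u hu hsu h
      exact hsu (hginj s (by omega) u (by omega) (hFinj h))
    by_cases ht0 : t = 0
    · subst ht0
      have e1 : StrongNeighbor Δ (F (g 0)) (F (g 1)) := by
        have := hedge (g 0)
        rwa [hgsucc 0] at this
      have e2 : StrongNeighbor Δ (F (g 0)) (F (g d)) := by
        have hg0 : g 0 = a := by simp [hg]
        rw [hg0, hgd]
        exact hab
      exact ⟨F (g 1), F (g d), hgne 1 (by omega) d (le_refl d) (by omega),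
        sn_mono hΓsub (hmemΓ 0 (by omega)) (hmemΓ 1 (by omega)) e1,
        sn_mono hΓsub (hmemΓ 0 (by omega)) (hmemΓ d (le_refl d)) e2⟩
    · by_cases htd : t = d
      · have hsucc : t - 1 + 1 = t := by omega
        have hgtb : g t = b := by rw [htd]; exact hgd
        have e1 : StrongNeighbor Δ (F (g t)) (F (g (t - 1))) := by
          have := hedge (g (t - 1))
          rw [hgsucc (t - 1), hsucc] at this
          exact sn_symm this
        have e2 : StrongNeighbor Δ (F (g t)) (F (g 0)) := by
          have hg0 : g 0 = a := by simp [hg]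
          rw [hg0, hgtb]
          exact sn_symm hab
        exact ⟨F (g (t - 1)), F (g 0), hgne (t-1) (by omega) 0 (by omega) (by omega),
          sn_mono hΓsub (hmemΓ t (by omega)) (hmemΓ (t-1) (by omega)) e1,
          sn_mono hΓsub (hmemΓ t (by omega)) (hmemΓ 0 (by omega)) e2⟩
      · have hsucc : t - 1 + 1 = t := by omega
        have e1 : StrongNeighbor Δ (F (g t)) (F (g (t - 1))) := by
          have := hedge (g (t - 1))
          rw [hgsucc (t - 1), hsucc] at this
          exact sn_symm this
        have e2 : StrongNeighbor Δ (F (g t)) (F (g (t + 1))) := by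
          have := hedge (g t)
          rwa [hgsucc t] at this
        exact ⟨F (g (t - 1)), F (g (t + 1)),
          hgne (t-1) (by omega) (t+1) (by omega) (by omega),
          sn_mono hΓsub (hmemΓ t (by omega)) (hmemΓ (t-1) (by omega)) e1,
          sn_mono hΓsub (hmemΓ t (by omega)) (hmemΓ (t+1) (by omega)) e2⟩
  exact no_leaf_of_two_sn h2sn (hcyc.2.2 Γ hss ⟨F (g 0), hmemΓ 0 (by omega)⟩)
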